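/- If (A,S,P) is a 𝔓-contraction on a complex Hilbert space H, then (A, S/2) is a 𝔹₂-contraction. -/

import Mathlib

/-!
For a polynomial `g` on `𝔹̄₂` put `f(z₁, z₂, z₃) = g(z₁, z₂ / 2)`; then `f(A, S, P) = g(A, S / 2)`.
For a contraction `A₀ = [aᵢⱼ]` the first column and the second row have norm at most one, so
`|a₂₁|² + |tr A₀ / 2|² ≤ |a₂₁|² + (|a₁₁|² + |a₂₂|²) / 2 ≤ 1`. Thus `(a₂₁, tr A₀ / 2) ∈ 𝔹̄₂`, whence
`sup_𝔓̄ |f| ≤ sup_𝔹̄₂ |g|` and the von Neumann inequality for `f` gives the one for `g`.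
-/

open ContinuousLinearMap

noncomputable section

/-- The operator norm of a 2×2 complex matrix, acting on ℂ² with the Euclidean norm. -/
noncomputable def matOpNorm (M : Matrix (Fin 2) (Fin 2) ℂ) : ℝ :=
  ‖Matrix.toEuclideanCLM (𝕜 := ℂ) M‖

/-- The closed pentablock 𝔓̄ ⊆ ℂ³ : the set of (a₂₁, tr A₀, det A₀) over 2×2 matrices A₀
of operator norm at most 1. -/
def pentablock : Set (ℂ × ℂ × ℂ) :=
  {x | ∃ M : Matrix (Fin 2) (Fin 2) ℂ, matOpNorm M ≤ 1 ∧ x = (M 1 0, M.trace, M.det)}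

/-- The closed biball 𝔹̄₂ ⊆ ℂ². -/
def closedBiball : Set (ℂ × ℂ) :=
  {z | ‖z.1‖ ^ 2 + ‖z.2‖ ^ 2 ≤ 1}

/-- sup of |f| over a subset of ℂ³, for a polynomial f in three variables. -/
noncomputable def supAbs3 (X : Set (ℂ × ℂ × ℂ)) (f : MvPolynomial (Fin 3) ℂ) : ℝ :=
  sSup ((fun z : ℂ × ℂ × ℂ => ‖MvPolynomial.eval ![z.1, z.2.1, z.2.2] f‖) '' X)

/-- sup of |g| over a subset of ℂ², for a polynomial g in two variables. -/
noncomputable def supAbs2 (X : Set (ℂ × ℂ)) (g : MvPolynomial (Fin 2) ℂ) : ℝ :=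
  sSup ((fun z : ℂ × ℂ => ‖MvPolynomial.eval ![z.1, z.2] g‖) '' X)

variable {H : Type*} [NormedAddCommGroup H] [InnerProductSpace ℂ H]

/-- Evaluation f(A,S,P) of a three-variable polynomial at a commuting triple of operators. -/
noncomputable def opEval3 (A S P : H →L[ℂ] H) (f : MvPolynomial (Fin 3) ℂ) : H →L[ℂ] H :=
  ∑ m ∈ f.support, f.coeff m • (A ^ m 0 * S ^ m 1 * P ^ m 2)

/-- Evaluation g(S,P) of a two-variable polynomial at a commuting pair of operators. -/
noncomputable def opEval2 (S P : H →L[ℂ] H) (g : MvPolynomial (Fin 2) ℂ) : H →L[ℂ] H :=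
  ∑ m ∈ g.support, g.coeff m • (S ^ m 0 * P ^ m 1)

/-- A commuting triple (A,S,P) is a 𝔓-contraction if the von Neumann inequality over the
closed pentablock holds for every polynomial in three variables. -/
def IsPContraction (A S P : H →L[ℂ] H) : Prop :=
  Commute A S ∧ Commute A P ∧ Commute S P ∧
    ∀ f : MvPolynomial (Fin 3) ℂ, ‖opEval3 A S P f‖ ≤ supAbs3 pentablock f

/-- A commuting pair is a 𝔹₂-contraction if the von Neumann inequality over the
closed biball holds for every polynomial in two variables. -/
def IsB2Contraction (A B : H →L[ℂ] H) : Prop :=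
  Commute A B ∧
    ∀ g : MvPolynomial (Fin 2) ℂ, ‖opEval2 A B g‖ ≤ supAbs2 closedBiball g


namespace Matrix

open scoped Matrix.Norms.L2Operator

variable {𝕜 m n : Type*} [RCLike 𝕜] [Fintype m] [Fintype n] [DecidableEq n]

theorem sum_norm_sq_col_le_l2_opNorm_sq (A : Matrix m n 𝕜) (j : n) :
    ∑ i, ‖A i j‖ ^ 2 ≤ ‖A‖ ^ 2 := by
  have h := A.l2_opNorm_mulVec (EuclideanSpace.single j 1)
  simp only [PiLp.ofLp_single, mulVec_single_one, PiLp.norm_single, norm_one, mul_one] at h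
  calc ∑ i, ‖A i j‖ ^ 2 = ‖(EuclideanSpace.equiv m 𝕜).symm (A.col j)‖ ^ 2 := by
        simp [EuclideanSpace.norm_sq_eq]
    _ ≤ ‖A‖ ^ 2 := by gcongr

theorem sum_norm_sq_row_le_l2_opNorm_sq [DecidableEq m] (A : Matrix m n 𝕜) (i : m) :
    ∑ j, ‖A i j‖ ^ 2 ≤ ‖A‖ ^ 2 := by
  simpa [l2_opNorm_conjTranspose] using Aᴴ.sum_norm_sq_col_le_l2_opNorm_sq i

end Matrix

section Geometry

open scoped Matrix.Norms.L2Operator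

theorem matOpNorm_eq_l2_opNorm (M : Matrix (Fin 2) (Fin 2) ℂ) : matOpNorm M = ‖M‖ := rfl

theorem zero_mem_pentablock : (0, 0, 0) ∈ pentablock :=
  ⟨0, by simp [matOpNorm_eq_l2_opNorm], by simp⟩

theorem mem_closedBiball_of_matOpNorm_le_one {M : Matrix (Fin 2) (Fin 2) ℂ}
    (hM : matOpNorm M ≤ 1) : (M 1 0, 2⁻¹ * M.trace) ∈ closedBiball := by
  rw [matOpNorm_eq_l2_opNorm] at hM
  have hcol := M.sum_norm_sq_col_le_l2_opNorm_sq 0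
  have hrow := M.sum_norm_sq_row_le_l2_opNorm_sq 1
  have htrace : ‖M.trace‖ ≤ ‖M 0 0‖ + ‖M 1 1‖ := by
    rw [Matrix.trace_fin_two]
    exact norm_add_le _ _
  have hM2 : ‖M‖ ^ 2 ≤ 1 := pow_le_one₀ (norm_nonneg M) hM
  simp only [Fin.sum_univ_two] at hcol hrow
  change ‖M 1 0‖ ^ 2 + ‖2⁻¹ * M.trace‖ ^ 2 ≤ 1
  rw [norm_mul, norm_inv, Complex.norm_ofNat]
  nlinarith [sq_nonneg (‖M 0 0‖ - ‖M 1 1‖), norm_nonneg M.trace]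

theorem isCompact_closedBiball : IsCompact closedBiball := by
  refine Metric.isCompact_of_isClosed_isBounded (isClosed_le (by fun_prop) continuous_const)
    ((Metric.isBounded_closedBall (x := 0) (r := 1)).subset ?_)
  intro z (hz : ‖z.1‖ ^ 2 + ‖z.2‖ ^ 2 ≤ 1)
  rw [mem_closedBall_zero_iff, Prod.norm_def, max_le_iff, ← sq_le_one_iff₀ (norm_nonneg _),
    ← sq_le_one_iff₀ (norm_nonneg _)]
  constructor <;> nlinarith [sq_nonneg ‖z.1‖, sq_nonneg ‖z.2‖]

theorem bddAbove_norm_eval_closedBiball (g : MvPolynomial (Fin 2) ℂ) :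
    BddAbove ((fun z : ℂ × ℂ => ‖MvPolynomial.eval ![z.1, z.2] g‖) '' closedBiball) := by
  have hpair : Continuous fun z : ℂ × ℂ => ![z.1, z.2] :=
    continuous_pi fun i => by fin_cases i <;> simp <;> fun_prop
  exact (isCompact_closedBiball.image ((MvPolynomial.continuous_eval g).comp hpair).norm).bddAbove

theorem supAbs3_le_supAbs2 {X : Set (ℂ × ℂ × ℂ)} {Y : Set (ℂ × ℂ)}
    {f : MvPolynomial (Fin 3) ℂ} {g : MvPolynomial (Fin 2) ℂ} (hX : X.Nonempty)
    (hY : BddAbove ((fun z : ℂ × ℂ => ‖MvPolynomial.eval ![z.1, z.2] g‖) '' Y))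
    (h : ∀ x ∈ X, ∃ y ∈ Y,
      MvPolynomial.eval ![x.1, x.2.1, x.2.2] f = MvPolynomial.eval ![y.1, y.2] g) :
    supAbs3 X f ≤ supAbs2 Y g := by
  refine csSup_le (hX.image _) ?_
  rintro _ ⟨x, hx, rfl⟩
  obtain ⟨y, hy, hxy⟩ := h x hx
  exact (congrArg norm hxy).trans_le (le_csSup hY ⟨y, hy, rfl⟩)

end Geometry

section ScaledSubstitution

open MvPolynomial

theorem eval_bind₁_scale_snd (z : Fin 3 → ℂ) (c : ℂ) (g : MvPolynomial (Fin 2) ℂ) :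
    eval z (bind₁ ![X 0, C c * X 1] g) = eval ![z 0, c * z 1] g := by
  refine (eval₂Hom_bind₁ _ _ _ g).trans (congrArg (eval · g) ?_)
  funext i
  fin_cases i <;> simp [mul_comm]

variable (A S P : H →L[ℂ] H)

theorem opEval3_eq_linearCombination (f : MvPolynomial (Fin 3) ℂ) :
    opEval3 A S P f = Finsupp.linearCombination ℂ
      (fun m : Fin 3 →₀ ℕ => A ^ m 0 * S ^ m 1 * P ^ m 2) (AddMonoidAlgebra.coeff f) := by
  rw [Finsupp.linearCombination_apply]
  rfl

theorem opEval2_eq_linearCombination (g : MvPolynomial (Fin 2) ℂ) :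
    opEval2 A S g = Finsupp.linearCombination ℂ
      (fun m : Fin 2 →₀ ℕ => A ^ m 0 * S ^ m 1) (AddMonoidAlgebra.coeff g) := by
  rw [Finsupp.linearCombination_apply]
  rfl

theorem opEval3_add (f f' : MvPolynomial (Fin 3) ℂ) :
    opEval3 A S P (f + f') = opEval3 A S P f + opEval3 A S P f' := by
  simp only [opEval3_eq_linearCombination, AddMonoidAlgebra.coeff_add, map_add]

theorem opEval2_add (g g' : MvPolynomial (Fin 2) ℂ) :
    opEval2 A S (g + g') = opEval2 A S g + opEval2 A S g' := by
  simp only [opEval2_eq_linearCombination, AddMonoidAlgebra.coeff_add, map_add]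

theorem opEval3_monomial (m : Fin 3 →₀ ℕ) (c : ℂ) :
    opEval3 A S P (monomial m c) = c • (A ^ m 0 * S ^ m 1 * P ^ m 2) := by
  rw [opEval3_eq_linearCombination, ← single_eq_monomial, AddMonoidAlgebra.coeff_single,
    Finsupp.linearCombination_single]

theorem opEval2_monomial (m : Fin 2 →₀ ℕ) (c : ℂ) :
    opEval2 A S (monomial m c) = c • (A ^ m 0 * S ^ m 1) := by
  rw [opEval2_eq_linearCombination, ← single_eq_monomial, AddMonoidAlgebra.coeff_single,
    Finsupp.linearCombination_single]

theorem opEval3_C_mul_X_pow_mul_X_pow (c : ℂ) (i j : ℕ) :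
    opEval3 A S P (C c * X 0 ^ i * X 1 ^ j) = c • (A ^ i * S ^ j) := by
  simp [X_pow_eq_monomial, C_mul_monomial, monomial_mul, opEval3_monomial]

theorem opEval3_bind₁_scale_snd (c : ℂ) (g : MvPolynomial (Fin 2) ℂ) :
    opEval3 A S P (bind₁ ![X 0, C c * X 1] g) = opEval2 A (c • S) g := by
  induction g using MvPolynomial.induction_on' with
  | monomial m a =>
    have hsubst : (bind₁ ![X 0, C c * X 1] (monomial m a) : MvPolynomial (Fin 3) ℂ) =
        C (a * c ^ m 1) * X 0 ^ m 0 * X 1 ^ m 1 := by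
      rw [monomial_eq, Finsupp.prod_fintype _ _ (by simp)]
      simp only [map_mul, bind₁_C_right, map_pow, bind₁_X_right, Fin.prod_univ_two,
        Matrix.cons_val_zero, Matrix.cons_val_one, mul_pow]
      ring
    rw [hsubst, opEval3_C_mul_X_pow_mul_X_pow, opEval2_monomial, smul_pow, mul_smul_comm,
      smul_smul]
  | add g g' hg hg' => rw [map_add, opEval3_add, opEval2_add, hg, hg']

end ScaledSubstitution

theorem stmt7_general {H : Type*} [NormedAddCommGroup H] [InnerProductSpace ℂ H]
    (A S P : H →L[ℂ] H) (h : IsPContraction A S P) :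
    IsB2Contraction A (((2 : ℂ)⁻¹) • S) := by
  obtain ⟨hAS, -, -, hvN⟩ := h
  refine ⟨hAS.smul_right _, fun g => ?_⟩
  rw [← opEval3_bind₁_scale_snd A S P]
  refine (hvN _).trans (supAbs3_le_supAbs2 ⟨_, zero_mem_pentablock⟩
    (bddAbove_norm_eval_closedBiball g) ?_)
  rintro _ ⟨M, hM, rfl⟩
  exact ⟨_, mem_closedBiball_of_matOpNorm_le_one hM, eval_bind₁_scale_snd _ _ g⟩

theorem stmt7 {H : Type*} [NormedAddCommGroup H] [InnerProductSpace ℂ H] [CompleteSpace H]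
    (A S P : H →L[ℂ] H) (h : IsPContraction A S P) :
    IsB2Contraction A (((2 : ℂ)⁻¹) • S) :=
  stmt7_general A S P h
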